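/- arXiv:1903.03538 — 2 statements merged into one kernel-verified Lean document; each statement's English description precedes it below -/
import Mathlib

section
/- Let G=(V,A) be a finite undirected graph, let B, D, E be subsets of V, and let M be a minimal separator between B and D given E. Then the following two conditions are equivalent: (i) for every separator M' between B and D given E, D is separated from M given M' ∪ E; (ii) for every minimal separator M' between B and D given E, B is separated from M' given M ∪ E. -/
/-- `USep G X Y M` : every path (walk) between a vertex of `X` and a vertex of `Y`
contains a vertex of `M`, i.e. `M` separates `X` and `Y` in the undirected graph `G`. -/
def USep {V : Type*} (G : SimpleGraph V) (X Y M : Set V) : Prop :=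
  ∀ ⦃u : V⦄, u ∈ X → ∀ ⦃v : V⦄, v ∈ Y → ∀ p : G.Walk u v, ∃ w ∈ p.support, w ∈ M

/-- `Mb G B C E` : the Markov blanket of `B` in `C` given `E`, defined as
`{v ∈ C : v is not separated from B given E ∪ (C \ (B ∪ {v}))}`. -/
def Mb {V : Type*} (G : SimpleGraph V) (B C E : Set V) : Set V :=
  {v | v ∈ C ∧ ¬ USep G {v} B (E ∪ (C \ (B ∪ {v})))}

/-- `M` is a separator between `B` and `D` given the evidence set `E`. -/
def IsSep {V : Type*} (G : SimpleGraph V) (B D E M : Set V) : Prop :=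
  USep G B D (M ∪ E)

/-- `M` is a minimal separator between `B` and `D` given the evidence set `E`. -/
def IsMinSep {V : Type*} (G : SimpleGraph V) (B D E M : Set V) : Prop :=
  IsSep G B D E M ∧ ∀ M' ⊂ M, ¬ IsSep G B D E M'

/-!
Write `Reach_S(X)` for the vertices joined to `X` by a walk outside `S`. Every vertex `m` of a
minimal separator `M` of `X` and `Y` given `E` is entered from `X`: either `m ∈ X` or `m` has a
neighbour in `Reach_{M ∪ E}(X)`. Hence, if a separator `N` misses `Reach_{M ∪ E}(X)`, then
`Reach_{M ∪ E}(X) ⊆ Reach_{N ∪ E}(X)`, so every `m ∈ M` lies outside `Reach_{N ∪ E}(Y)`: otherwise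
`m` would join `X` to `Y` outside `N ∪ E`. Applied to `(X, Y, M, N) = (D, B, M', M)` this gives
(i) ⇒ (ii), and applied to `(B, D, M, M₀)` for a minimal separator `M₀ ⊆ M'` it gives (ii) ⇒ (i).
-/

namespace SimpleGraph

variable {V : Type*} {G : SimpleGraph V} {S T : Set V} {x y z : V}

def ReachableAvoiding (G : SimpleGraph V) (S : Set V) (x y : V) : Prop :=
  ∃ p : G.Walk x y, ∀ w ∈ p.support, w ∉ S

namespace ReachableAvoiding

theorem refl (hx : x ∉ S) : G.ReachableAvoiding S x x :=
  ⟨Walk.nil, by simpa using hx⟩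

theorem symm (h : G.ReachableAvoiding S x y) : G.ReachableAvoiding S y x := by
  obtain ⟨p, hp⟩ := h
  exact ⟨p.reverse, by simpa using hp⟩

theorem trans (hxy : G.ReachableAvoiding S x y) (hyz : G.ReachableAvoiding S y z) :
    G.ReachableAvoiding S x z := by
  obtain ⟨p, hp⟩ := hxy
  obtain ⟨q, hq⟩ := hyz
  refine ⟨p.append q, fun w hw => ?_⟩
  rcases (Walk.mem_support_append_iff p q).mp hw with hw | hw
  exacts [hp w hw, hq w hw]

theorem left_notMem (h : G.ReachableAvoiding S x y) : x ∉ S :=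
  h.elim fun p hp => hp x p.start_mem_support

theorem right_notMem (h : G.ReachableAvoiding S x y) : y ∉ S :=
  h.elim fun p hp => hp y p.end_mem_support

theorem step (h : G.ReachableAvoiding S x y) (hyz : G.Adj y z) (hz : z ∉ S) :
    G.ReachableAvoiding S x z :=
  h.trans ⟨Walk.cons hyz Walk.nil, by simpa using ⟨h.right_notMem, hz⟩⟩

theorem mono (h : G.ReachableAvoiding S x y) (hTS : T ⊆ S) : G.ReachableAvoiding T x y :=
  h.imp fun _ hp w hw hwT => hp w hw (hTS hwT)

theorem of_forall_notMem (h : G.ReachableAvoiding S x y)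
    (hT : ∀ u, G.ReachableAvoiding S x u → u ∉ T) : G.ReachableAvoiding T x y := by
  obtain ⟨p, hp⟩ := h
  classical
  exact ⟨p, fun w hw => hT w
    ⟨p.takeUntil w hw, fun u hu => hp u (p.support_takeUntil_subset_support hw hu)⟩⟩

end ReachableAvoiding

theorem Walk.exists_reachableAvoiding_adj_mem (p : G.Walk x y) (hx : x ∉ S)
    (hS : ∃ w ∈ p.support, w ∈ S) :
    ∃ u v, G.ReachableAvoiding S x u ∧ G.Adj u v ∧ v ∈ S ∧ v ∈ p.support := by
  induction p with
  | nil =>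
    obtain ⟨w, hw, hwS⟩ := hS
    rw [Walk.mem_support_nil_iff] at hw
    exact absurd (hw ▸ hwS) hx
  | @cons x z y hxz q ih =>
    by_cases hz : z ∈ S
    · exact ⟨x, z, .refl hx, hxz, hz, by simp⟩
    · obtain ⟨w, hw, hwS⟩ := hS
      have hwq : w ∈ q.support := by
        rcases (Walk.mem_support_iff _).mp hw with rfl | hw
        exacts [absurd hwS hx, by simpa using hw]
      obtain ⟨u, v, hzu, huv, hv, hvq⟩ := ih hz ⟨w, hwq, hwS⟩
      exact ⟨u, v, (ReachableAvoiding.refl hx).step hxz hz |>.trans hzu, huv, hv, by simp [hvq]⟩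

end SimpleGraph

open SimpleGraph

section

variable {V : Type*} {G : SimpleGraph V} {X Y E M N S T : Set V}

theorem usep_iff : USep G X Y S ↔ ∀ x ∈ X, ∀ y ∈ Y, ¬ G.ReachableAvoiding S x y := by
  simp only [USep, ReachableAvoiding, not_exists, not_forall, not_not, exists_prop]

theorem USep.symm (h : USep G X Y S) : USep G Y X S := by
  rw [usep_iff] at h ⊢
  exact fun y hy x hx hyx => h x hx y hy hyx.symm

theorem USep.mono (h : USep G X Y S) (hST : S ⊆ T) : USep G X Y T := by
  rw [usep_iff] at h ⊢
  exact fun x hx y hy hxy => h x hx y hy (hxy.mono hST)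

theorem IsMinSep.symm (hM : IsMinSep G X Y E M) : IsMinSep G Y X E M :=
  ⟨USep.symm hM.1, fun M' hM' hsep => hM.2 M' hM' (USep.symm hsep)⟩

theorem IsSep.exists_isMinSep_subset [Finite V] (hM : IsSep G X Y E M) :
    ∃ M₀ ⊆ M, IsMinSep G X Y E M₀ := by
  obtain ⟨M₀, hM₀M, hmin⟩ := exists_minimal_le_of_wellFoundedLT (IsSep G X Y E) M hM
  exact ⟨M₀, hM₀M, hmin.prop, fun _ hlt => hmin.not_prop_of_lt hlt⟩

theorem IsMinSep.mem_or_exists_adj (hM : IsMinSep G X Y E M) {m : V} (hm : m ∈ M) :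
    m ∈ X ∨ ∃ x ∈ X, ∃ u, G.ReachableAvoiding (M ∪ E) x u ∧ G.Adj u m := by
  have hnot := hM.2 (M \ {m}) (Set.sdiff_singleton_ssubset.mpr hm)
  simp only [IsSep, usep_iff, not_forall, not_not] at hnot
  obtain ⟨x, hx, y, hy, p, hp⟩ := hnot
  have honly : ∀ w ∈ p.support, w ∈ M ∪ E → w = m := by
    intro w hw hwME
    by_contra hwm
    exact hp w hw (hwME.imp_left fun hwM => ⟨hwM, hwm⟩)
  by_cases hxME : x ∈ M ∪ E
  · exact .inl (honly x p.start_mem_support hxME ▸ hx)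
  · obtain ⟨u, v, hxu, huv, hv, hvp⟩ := p.exists_reachableAvoiding_adj_mem hxME (hM.1 hx hy p)
    exact .inr ⟨x, hx, u, hxu, honly v hvp hv ▸ huv⟩

theorem IsMinSep.usep_of_usep (hM : IsMinSep G X Y E M) (hN : IsSep G X Y E N)
    (hXN : USep G X N (M ∪ E)) : USep G Y M (N ∪ E) := by
  have hN' := usep_iff.mp hN
  rw [usep_iff] at hXN ⊢
  intro y hy m hm hym
  rcases hM.mem_or_exists_adj hm with hmX | ⟨x, hx, u, hxu, hum⟩
  · exact hN' m hmX y hy hym.symm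
  · have hxu' : G.ReachableAvoiding (N ∪ E) x u := hxu.of_forall_notMem fun v hxv hvNE =>
      hvNE.elim (hXN x hx v · hxv) fun hvE => hxv.right_notMem (Or.inr hvE)
    exact hN' x hx y hy ((hxu'.step hum hym.right_notMem).trans hym.symm)

end

theorem stmt_4 {V : Type*} [Fintype V] (G : SimpleGraph V) (B D E M : Set V)
    (hM : IsMinSep G B D E M) :
    (∀ M', IsSep G B D E M' → USep G D M (M' ∪ E)) ↔
      (∀ M', IsMinSep G B D E M' → USep G B M' (M ∪ E)) := by
  constructor
  · intro h M' hM'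
    exact hM'.symm.usep_of_usep (USep.symm hM.1) (h M' hM'.1)
  · intro h M' hM'
    obtain ⟨M₀, hM₀M', hM₀⟩ := hM'.exists_isMinSep_subset
    exact (hM.usep_of_usep hM₀.1 (h M₀ hM₀)).mono (Set.union_subset_union_left E hM₀M')
end

section
/- Let G=(V,A) be a finite undirected graph, let B, D, E be subsets of V, and let M be a separator between B and D given E. Then mb_M(B|E) is a separator between B and D given E. -/
/-- First vertex of `M` along a walk: a prefix walk hitting `M` only at its end. -/
lemma firstM {V : Type*} {G : SimpleGraph V} (M : Set V) :
    ∀ {u v : V} (p : G.Walk u v), (∃ x ∈ p.support, x ∈ M) →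
      ∃ w, w ∈ M ∧ ∃ q : G.Walk u w,
        (∀ x ∈ q.support, x ∈ M → x = w) ∧ ∀ x ∈ q.support, x ∈ p.support := by
  intro u v p
  induction p with
  | nil =>
    rintro ⟨x, hx, hxM⟩
    simp only [SimpleGraph.Walk.support_nil, List.mem_singleton] at hx
    subst hx
    exact ⟨x, hxM, SimpleGraph.Walk.nil, by simp, by simp⟩
  | @cons a b c h p ih =>
    rintro ⟨x, hx, hxM⟩
    by_cases haM : a ∈ M
    · exact ⟨a, haM, SimpleGraph.Walk.nil, by simp, by simp⟩
    · have hx' : x ∈ p.support := by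
        rcases (SimpleGraph.Walk.mem_support_iff _).1 hx with rfl | h'
        · exact absurd hxM haM
        · simpa using h'
      obtain ⟨w, hwM, q, hq1, hq2⟩ := ih ⟨x, hx', hxM⟩
      refine ⟨w, hwM, SimpleGraph.Walk.cons h q, ?_, ?_⟩
      · intro y hy hyM
        rcases (SimpleGraph.Walk.mem_support_iff _).1 hy with rfl | h'
        · exact absurd hyM haM
        · exact hq1 y (by simpa using h') hyM
      · intro y hy
        rcases (SimpleGraph.Walk.mem_support_iff _).1 hy with rfl | h'
        · simp
        · simp only [SimpleGraph.Walk.support_cons, List.mem_cons]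
          exact Or.inr (hq2 y (by simpa using h'))

theorem stmt_12 {V : Type*} [Fintype V] (G : SimpleGraph V) (B D E M : Set V)
    (hM : IsSep G B D E M) :
    IsSep G B D E (Mb G B M E) := by
  intro u hu v hv p
  by_cases hE : ∃ x ∈ p.support, x ∈ E
  · obtain ⟨x, hx, hxE⟩ := hE
    exact ⟨x, hx, Or.inr hxE⟩
  push_neg at hE
  -- p must hit M since it avoids E
  obtain ⟨w0, hw0, hw0M⟩ := hM hu hv p
  have hw0M' : w0 ∈ M := hw0M.resolve_right (hE w0 hw0)
  obtain ⟨w, hwM, q, hq1, hq2⟩ := firstM M p ⟨w0, hw0, hw0M'⟩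
  refine ⟨w, hq2 w q.end_mem_support, Or.inl ⟨hwM, ?_⟩⟩
  intro hsep
  obtain ⟨z, hz, hzM⟩ := hsep rfl hu q.reverse
  rw [SimpleGraph.Walk.support_reverse, List.mem_reverse] at hz
  rcases hzM with hzE | ⟨hzM, hznot⟩
  · exact hE z (hq2 z hz) hzE
  · exact hznot (Or.inr (hq1 z hz hzM))
end
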